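/- arXiv:1902.03502 — 2 statements merged into one kernel-verified Lean document; each statement's English description precedes it below -/
import Mathlib

section
/- Let A ∈ ℝ^{m×n} with rows a_i of unit norm, b ∈ ℝ^m, and let (A^T A)^† denote the Moore–Penrose pseudoinverse of A^T A. For y ∈ ℝ^n, consider the sampling scheme that picks β rows uniformly at random and selects the row i* maximizing the positive residual (a_i^T y − b_i)^+ over the sample; equivalently, the expectation over this scheme of a quantity depending on the selected index equals (1/C(m,β)) Σ_{k=0}^{m−β} C(β−1+k, β−1) times the quantity evaluated at the index of the (β+k)-th smallest entry of (Ay − b)^+. Then E[‖a_{i*} (a_{i*}^T y − b_{i*})^+‖²_{(A^T A)^†}] ≤ (β/m) ‖(Ay − b)^+‖². -/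
/-!
Since `B` is a generalized inverse of `AᵀA`, the matrix `P = A B Aᵀ` is the orthogonal projection
onto the range of `A`, so the leverage scores `aᵢᵀ B aᵢ = Pᵢᵢ` lie in `[0, 1]`. Each sampled term is
therefore at most its weight times `(aᵢᵀy − bᵢ)⁺²`, every weight `C(β−1+k, β−1)` is at most
`C(m−1, β−1)`, and `C(m−1, β−1) / C(m, β) = β / m`.
-/

noncomputable section
open Matrix Finset

/-- Positive residual `(aᵢᵀy − bᵢ)⁺` of row `i` of the system `Ax ≤ b` at `y`. -/
def res {m n : ℕ} (A : Matrix (Fin m) (Fin n) ℝ) (b : Fin m → ℝ) (y : Fin n → ℝ)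
    (i : Fin m) : ℝ :=
  max (A.mulVec y i - b i) 0

namespace Matrix

variable {m n : Type*} [Fintype m] [Fintype n]

theorem mul_mul_transpose_mul_self_eq_self [DecidableEq n] {A : Matrix m n ℝ} {B : Matrix n n ℝ}
    (hB : Aᵀ * A * B * (Aᵀ * A) = Aᵀ * A) : A * B * (Aᵀ * A) = A := by
  have h : Aᴴ * A * (B * (Aᵀ * A) - 1) = 0 := by
    rw [conjTranspose_eq_transpose_of_trivial, Matrix.mul_sub, Matrix.mul_one, ← Matrix.mul_assoc,
      hB, sub_self]
  rw [conjTranspose_mul_self_mul_eq_zero, Matrix.mul_sub, Matrix.mul_one, sub_eq_zero,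
    ← Matrix.mul_assoc] at h
  exact h

theorem isIdempotentElem_mul_mul_transpose {A : Matrix m n ℝ} {B : Matrix n n ℝ}
    (hA : A * B * (Aᵀ * A) = A) : IsIdempotentElem (A * B * Aᵀ) := by
  calc A * B * Aᵀ * (A * B * Aᵀ) = A * B * (Aᵀ * A) * (B * Aᵀ) := by simp only [Matrix.mul_assoc]
    _ = A * B * Aᵀ := by rw [hA, Matrix.mul_assoc]

theorem isSymm_mul_mul_transpose {A : Matrix m n ℝ} {B : Matrix n n ℝ}
    (hA : A * B * (Aᵀ * A) = A) : (A * B * Aᵀ).IsSymm := by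
  set P := A * B * Aᵀ
  have hPT : Pᵀ = A * Bᵀ * Aᵀ := by
    simp only [P, transpose_mul, transpose_transpose, Matrix.mul_assoc]
  have hPPT : P * Pᵀ = Pᵀ := by
    calc P * Pᵀ = A * B * (Aᵀ * A) * (Bᵀ * Aᵀ) := by rw [hPT]; simp only [P, Matrix.mul_assoc]
      _ = Pᵀ := by rw [hA, hPT, Matrix.mul_assoc]
  calc Pᵀ = P * Pᵀ := hPPT.symm
    _ = (P * Pᵀ)ᵀ := by rw [transpose_mul P, transpose_transpose P]
    _ = P := by rw [hPPT, transpose_transpose]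

theorem diag_mem_Icc_of_isSymm_of_isIdempotentElem {P : Matrix m m ℝ} (hsymm : P.IsSymm)
    (hidem : IsIdempotentElem P) (i : m) : P i i ∈ Set.Icc 0 1 := by
  have hsum : P i i = ∑ j, P i j ^ 2 := by
    conv_lhs => rw [← hidem.eq]
    simp only [mul_apply, hsymm.apply, sq]
  have hsq : P i i ^ 2 ≤ P i i := hsum ▸ single_le_sum (fun j _ => sq_nonneg (P i j)) (mem_univ i)
  have hnonneg : 0 ≤ P i i := hsum ▸ sum_nonneg fun j _ => sq_nonneg _
  exact ⟨hnonneg, by nlinarith⟩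

omit [Fintype m] in
theorem mul_mul_transpose_apply_self (A : Matrix m n ℝ) (B : Matrix n n ℝ) (i : m) :
    (A * B * Aᵀ) i i = A i ⬝ᵥ B *ᵥ A i := by
  simp only [mul_apply, transpose_apply, dotProduct, mulVec, sum_mul, mul_sum]
  rw [sum_comm]
  exact sum_congr rfl fun j _ => sum_congr rfl fun l _ => by ring

theorem row_dotProduct_mulVec_row_mem_Icc [DecidableEq n] {A : Matrix m n ℝ} {B : Matrix n n ℝ}
    (hB : Aᵀ * A * B * (Aᵀ * A) = Aᵀ * A) (i : m) : A i ⬝ᵥ B *ᵥ A i ∈ Set.Icc 0 1 := by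
  have hA := mul_mul_transpose_mul_self_eq_self hB
  rw [← mul_mul_transpose_apply_self]
  exact diag_mem_Icc_of_isSymm_of_isIdempotentElem (isSymm_mul_mul_transpose hA)
    (isIdempotentElem_mul_mul_transpose hA) i

theorem smul_row_dotProduct_mulVec_smul_row_mem_Icc [DecidableEq n] {A : Matrix m n ℝ}
    {B : Matrix n n ℝ} (hB : Aᵀ * A * B * (Aᵀ * A) = Aᵀ * A) (r : ℝ) (i : m) :
    (r • A i) ⬝ᵥ B *ᵥ (r • A i) ∈ Set.Icc 0 (r ^ 2) := by
  obtain ⟨hlev₀, hlev₁⟩ := row_dotProduct_mulVec_row_mem_Icc hB i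
  have hquad : (r • A i) ⬝ᵥ B *ᵥ (r • A i) = r ^ 2 * (A i ⬝ᵥ B *ᵥ A i) := by
    rw [mulVec_smul, smul_dotProduct, dotProduct_smul, smul_eq_mul, smul_eq_mul]; ring
  rw [hquad]
  exact ⟨by positivity, mul_le_of_le_one_right (sq_nonneg r) hlev₁⟩

end Matrix

theorem Fintype.sum_comp_le_sum_of_injective {κ ι : Type*} [Fintype κ] [Fintype ι] {g : κ → ι}
    (hg : g.Injective) {q : ι → ℝ} (hq : ∀ i, 0 ≤ q i) : ∑ k, q (g k) ≤ ∑ i, q i := by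
  calc ∑ k, q (g k) = ∑ i ∈ univ.map ⟨g, hg⟩, q i := (sum_map univ ⟨g, hg⟩ q).symm
    _ ≤ ∑ i, q i := sum_le_sum_of_subset_of_nonneg (subset_univ _) fun i _ _ => hq i

theorem Nat.cast_choose_pred_div_cast_choose {m β : ℕ} (hβ : 1 ≤ β) (hβm : β ≤ m) :
    ((m - 1).choose (β - 1) : ℝ) / m.choose β = β / m := by
  have h := Nat.add_one_mul_choose_eq (m - 1) (β - 1)
  rw [Nat.sub_add_cancel (hβ.trans hβm), Nat.sub_add_cancel hβ] at h
  have hchoose : (m.choose β : ℝ) ≠ 0 := by exact_mod_cast (Nat.choose_pos hβm).ne'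
  have hm : (m : ℝ) ≠ 0 := by exact_mod_cast (by omega : m ≠ 0)
  rw [div_eq_div_iff hchoose hm]
  norm_cast
  rw [mul_comm, h, mul_comm]

/-- For `A` with unit-norm rows and `B` the Moore–Penrose pseudoinverse
of `AᵀA` (characterized by the four Penrose conditions), under the sampling scheme that
picks `β` rows uniformly at random and selects the row maximizing the positive residual
(so that the expectation of a quantity `q` of the selected index equals
`(1/C(m,β)) Σ_{k=0}^{m−β} C(β−1+k, β−1) q(i_k)` where `i_k` is the index of the
`(β+k)`-th smallest entry of `(Ay − b)⁺`, encoded by a sorting bijection `ord`), one has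
`E[‖a_{i*}(a_{i*}ᵀy − b_{i*})⁺‖²_{(AᵀA)†}] ≤ (β/m)‖(Ay − b)⁺‖²`. -/
theorem stmt0 {m n β : ℕ} (hβ : 1 ≤ β) (hβm : β ≤ m)
    (A : Matrix (Fin m) (Fin n) ℝ) (b : Fin m → ℝ) (y : Fin n → ℝ)
    (B : Matrix (Fin n) (Fin n) ℝ)
    (hB1 : Aᵀ * A * B * (Aᵀ * A) = Aᵀ * A)
    (ord : Fin m ≃ Fin m) :
    (1 / (m.choose β : ℝ)) *
      ∑ k : Fin (m - β + 1), ((β - 1 + k.val).choose (β - 1) : ℝ) *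
        ((res A b y (ord ⟨β - 1 + k.val, by have := k.isLt; omega⟩) •
            A (ord ⟨β - 1 + k.val, by have := k.isLt; omega⟩)) ⬝ᵥ
          B.mulVec
            (res A b y (ord ⟨β - 1 + k.val, by have := k.isLt; omega⟩) •
              A (ord ⟨β - 1 + k.val, by have := k.isLt; omega⟩)))
    ≤ ((β : ℝ) / (m : ℝ)) * ∑ i, res A b y i ^ 2 := by
  set g : Fin (m - β + 1) → Fin m := fun k => ord ⟨β - 1 + k.val, by have := k.isLt; omega⟩
  have hg : g.Injective := fun k k' h => Fin.ext (by simpa [g] using h)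
  have hterm : ∀ k : Fin (m - β + 1), ((β - 1 + k.val).choose (β - 1) : ℝ) *
      ((res A b y (g k) • A (g k)) ⬝ᵥ B *ᵥ (res A b y (g k) • A (g k)))
        ≤ (m - 1).choose (β - 1) * res A b y (g k) ^ 2 := by
    intro k
    obtain ⟨hquad₀, hquad_le⟩ :=
      smul_row_dotProduct_mulVec_smul_row_mem_Icc hB1 (res A b y (g k)) (g k)
    have hweight : ((β - 1 + k.val).choose (β - 1) : ℝ) ≤ (m - 1).choose (β - 1) := by
      exact_mod_cast Nat.choose_le_choose _ (by omega)
    exact mul_le_mul hweight hquad_le hquad₀ (Nat.cast_nonneg _)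
  calc _ ≤ 1 / (m.choose β : ℝ) * ∑ k, ((m - 1).choose (β - 1) : ℝ) * res A b y (g k) ^ 2 :=
        mul_le_mul_of_nonneg_left (sum_le_sum fun k _ => hterm k) (by positivity)
    _ ≤ 1 / (m.choose β : ℝ) * (((m - 1).choose (β - 1) : ℝ) * ∑ i, res A b y i ^ 2) := by
        rw [← mul_sum]
        gcongr
        exact Fintype.sum_comp_le_sum_of_injective hg fun i => sq_nonneg _
    _ = _ := by rw [← mul_assoc, one_div_mul_eq_div, Nat.cast_choose_pred_div_cast_choose hβ hβm]
end
end

section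
/- Let λ, ζ, β, m > 0, σ₁ = 1 + √(λβζ)/(2m), σ₂ = 1 − √(λβζ)/(2m), and B₀ > 0, A₀ = 0. Suppose nonnegative sequences {A_k}, {B_k} satisfy A_{k+1} ≥ A_k + (ζ√β/(2m)) B_k and B_{k+1} ≥ B_k + (λ√β/(2m)) A_k for all k ≥ 0. Then for all k ≥ 0: A_{k+1} ≥ (1/2)√(ζ/λ)(σ₁^{k+1} − σ₂^{k+1}) B₀ and B_{k+1} ≥ (1/2)(σ₁^{k+1} + σ₂^{k+1}) B₀. -/
/-!
With `a, b ≥ 0` the coupled recurrence `x ↦ x + a y`, `y ↦ y + b x` is monotone, so a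
sub-solution stays below every super-solution. The matrix `[[1, a], [b, 1]]` has eigenvalues
`1 ± s` with `s² = ab`, and for `c s = a`, `b c = s` the exact solution from `(0, B₀)` is
`(c/2 ((1+s)^k - (1-s)^k) B₀, 1/2 ((1+s)^k + (1-s)^k) B₀)`; here `s = √(λβζ)/(2m)` and
`c = √(ζ/λ)`.
-/

section CoupledRecurrence

variable {a b : ℝ} {A B A' B' : ℕ → ℝ}

theorem coupled_recurrence_le_of_le (ha : 0 ≤ a) (hb : 0 ≤ b)
    (hA' : ∀ k, A' (k + 1) ≤ A' k + a * B' k) (hB' : ∀ k, B' (k + 1) ≤ B' k + b * A' k)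
    (hA : ∀ k, A k + a * B k ≤ A (k + 1)) (hB : ∀ k, B k + b * A k ≤ B (k + 1))
    (hA0 : A' 0 ≤ A 0) (hB0 : B' 0 ≤ B 0) :
    ∀ k, A' k ≤ A k ∧ B' k ≤ B k := by
  intro k
  induction k with
  | zero => exact ⟨hA0, hB0⟩
  | succ k ih =>
    obtain ⟨ihA, ihB⟩ := ih
    have hAB := mul_le_mul_of_nonneg_left ihB ha
    have hBA := mul_le_mul_of_nonneg_left ihA hb
    exact ⟨by linarith [hA' k, hA k], by linarith [hB' k, hB k]⟩

variable (c s x : ℝ) (k : ℕ)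

noncomputable def coupledSolA : ℝ := 1 / 2 * c * ((1 + s) ^ k - (1 - s) ^ k) * x

noncomputable def coupledSolB : ℝ := 1 / 2 * ((1 + s) ^ k + (1 - s) ^ k) * x

theorem coupledSolA_zero : coupledSolA c s x 0 = 0 := by
  simp [coupledSolA]

theorem coupledSolB_zero : coupledSolB s x 0 = x := by
  norm_num [coupledSolB]

variable {c s}

theorem coupledSolA_succ (hcs : c * s = a) :
    coupledSolA c s x (k + 1) = coupledSolA c s x k + a * coupledSolB s x k := by
  rw [coupledSolA, coupledSolA, coupledSolB, ← hcs]
  ring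

theorem coupledSolB_succ (hbc : b * c = s) :
    coupledSolB s x (k + 1) = coupledSolB s x k + b * coupledSolA c s x k := by
  rw [coupledSolA, coupledSolB, coupledSolB]
  linear_combination (-(1 / 2) * ((1 + s) ^ k - (1 - s) ^ k) * x) * hbc

end CoupledRecurrence

section SqrtIdentities

variable {lam ζ : ℝ} (β : ℝ) (hlam : 0 < lam) (hζ : 0 ≤ ζ)
include hlam hζ

theorem sqrt_div_mul_sqrt_mul_mul :
    √(ζ / lam) * √(lam * β * ζ) = ζ * √β := by
  rw [← Real.sqrt_mul (by positivity), show ζ / lam * (lam * β * ζ) = ζ ^ 2 * β by field_simp,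
    Real.sqrt_mul (sq_nonneg ζ), Real.sqrt_sq hζ]

theorem mul_sqrt_mul_sqrt_div :
    lam * √β * √(ζ / lam) = √(lam * β * ζ) := by
  rw [show lam * β * ζ = lam ^ 2 * (β * (ζ / lam)) by field_simp,
    Real.sqrt_mul (sq_nonneg lam), Real.sqrt_sq hlam.le, Real.sqrt_mul' β (by positivity), mul_assoc]

end SqrtIdentities

theorem stmt11_general (lam ζ β m : ℝ) (hlam : 0 < lam) (hζ : 0 < ζ) (hm : 0 < m)
    (A B : ℕ → ℝ) (hA0 : A 0 = 0)
    (hArec : ∀ k, A k + (ζ * Real.sqrt β / (2 * m)) * B k ≤ A (k + 1))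
    (hBrec : ∀ k, B k + (lam * Real.sqrt β / (2 * m)) * A k ≤ B (k + 1)) :
    ∀ k : ℕ,
      (1 / 2) * Real.sqrt (ζ / lam) *
          ((1 + Real.sqrt (lam * β * ζ) / (2 * m)) ^ (k + 1) -
            (1 - Real.sqrt (lam * β * ζ) / (2 * m)) ^ (k + 1)) * B 0 ≤ A (k + 1) ∧
      (1 / 2) *
          ((1 + Real.sqrt (lam * β * ζ) / (2 * m)) ^ (k + 1) +
            (1 - Real.sqrt (lam * β * ζ) / (2 * m)) ^ (k + 1)) * B 0 ≤ B (k + 1) := by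
  intro k
  have hcs : √(ζ / lam) * (√(lam * β * ζ) / (2 * m)) = ζ * √β / (2 * m) := by
    rw [← mul_div_assoc, sqrt_div_mul_sqrt_mul_mul β hlam hζ.le]
  have hbc : lam * √β / (2 * m) * √(ζ / lam) = √(lam * β * ζ) / (2 * m) := by
    rw [div_mul_eq_mul_div, mul_sqrt_mul_sqrt_div β hlam hζ.le]
  exact coupled_recurrence_le_of_le (by positivity) (by positivity)
    (fun j => (coupledSolA_succ (B 0) j hcs).le) (fun j => (coupledSolB_succ (B 0) j hbc).le)
    hArec hBrec (by rw [coupledSolA_zero, hA0]) (coupledSolB_zero _ _).le (k + 1)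

/-- Nonnegative sequences `{Aₖ}, {Bₖ}` with `A₀ = 0`, `B₀ > 0`
satisfying `Aₖ₊₁ ≥ Aₖ + (ζ√β/(2m))Bₖ` and `Bₖ₊₁ ≥ Bₖ + (λ√β/(2m))Aₖ` obey, for all
`k ≥ 0`, `Aₖ₊₁ ≥ (1/2)√(ζ/λ)(σ₁^{k+1} − σ₂^{k+1})B₀` and
`Bₖ₊₁ ≥ (1/2)(σ₁^{k+1} + σ₂^{k+1})B₀`, where `σ₁ = 1 + √(λβζ)/(2m)`,
`σ₂ = 1 − √(λβζ)/(2m)`. -/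
theorem stmt11 (lam ζ β m : ℝ) (hlam : 0 < lam) (hζ : 0 < ζ) (hβ : 0 < β) (hm : 0 < m)
    (A B : ℕ → ℝ) (hA0 : A 0 = 0) (hB0 : 0 < B 0)
    (hAnn : ∀ k, 0 ≤ A k) (hBnn : ∀ k, 0 ≤ B k)
    (hArec : ∀ k, A k + (ζ * Real.sqrt β / (2 * m)) * B k ≤ A (k + 1))
    (hBrec : ∀ k, B k + (lam * Real.sqrt β / (2 * m)) * A k ≤ B (k + 1)) :
    ∀ k : ℕ,
      (1 / 2) * Real.sqrt (ζ / lam) *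
          ((1 + Real.sqrt (lam * β * ζ) / (2 * m)) ^ (k + 1) -
            (1 - Real.sqrt (lam * β * ζ) / (2 * m)) ^ (k + 1)) * B 0 ≤ A (k + 1) ∧
      (1 / 2) *
          ((1 + Real.sqrt (lam * β * ζ) / (2 * m)) ^ (k + 1) +
            (1 - Real.sqrt (lam * β * ζ) / (2 * m)) ^ (k + 1)) * B 0 ≤ B (k + 1) :=
  stmt11_general lam ζ β m hlam hζ hm A B hA0 hArec hBrec
end
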